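/- Let (X, μ1, μ2) be a generalized bitopological space and let i, j ∈ {1,2} with i ≠ j. Then every singleton {x} (x ∈ X) is either μi-open or μj-closed if and only if every set that is g_{μi}-closed with respect to μj is μi-closed. -/

import Mathlib

open Set

/-- A generalized topology on `X`: contains `∅` and is closed under arbitrary unions. -/
def IsGenTop {X : Type*} (μ : Set (Set X)) : Prop :=
  ∅ ∈ μ ∧ ∀ S ⊆ μ, ⋃₀ S ∈ μ

/-- `A` is μ-closed iff its complement is μ-open. -/
def gClosedSet {X : Type*} (μ : Set (Set X)) (A : Set X) : Prop := Aᶜ ∈ μ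

/-- μ-closure: intersection of all μ-closed sets containing `A`. -/
def gCl {X : Type*} (μ : Set (Set X)) (A : Set X) : Set X :=
  ⋂₀ {F | gClosedSet μ F ∧ A ⊆ F}

/-- `A^∧_μ`: intersection of all μ-open sets containing `A`. -/
def wedgeOp {X : Type*} (μ : Set (Set X)) (A : Set X) : Set X :=
  ⋂₀ {U | U ∈ μ ∧ A ⊆ U}

/-- `A^∨_μ`: union of all μ-closed sets contained in `A`. -/
def veeOp {X : Type*} (μ : Set (Set X)) (A : Set X) : Set X :=
  ⋃₀ {F | gClosedSet μ F ∧ F ⊆ A}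

/-- `L` is a `∧_μ`-set. -/
def IsWedgeSet {X : Type*} (μ : Set (Set X)) (L : Set X) : Prop := L = wedgeOp μ L

/-- `M` is a `∨_μ`-set. -/
def IsVeeSet {X : Type*} (μ : Set (Set X)) (M : Set X) : Prop := M = veeOp μ M

/-- `A` is `g_{μi}`-closed with respect to `μj`. -/
def GClosedWrt {X : Type*} (μi μj : Set (Set X)) (A : Set X) : Prop :=
  ∀ U ∈ μj, A ⊆ U → gCl μi A ⊆ U

/-- `A` is `g_{μi}`-open with respect to `μj`. -/
def GOpenWrt {X : Type*} (μi μj : Set (Set X)) (A : Set X) : Prop :=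
  GClosedWrt μi μj Aᶜ

/-- `A` is `λ_{μi}`-closed with respect to `μj`. -/
def LamClosedWrt {X : Type*} (μi μj : Set (Set X)) (A : Set X) : Prop :=
  ∃ F L : Set X, gClosedSet μi F ∧ IsWedgeSet μj L ∧ A = F ∩ L

/-- `A` is `λ_{μi}`-open with respect to `μj`. -/
def LamOpenWrt {X : Type*} (μi μj : Set (Set X)) (A : Set X) : Prop :=
  LamClosedWrt μi μj Aᶜ

/-- `A` is pairwise `λ`-closed. -/
def PairwiseLamClosed {X : Type*} (μ1 μ2 : Set (Set X)) (A : Set X) : Prop :=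
  ∃ F1 F2 L1 L2 : Set X, gClosedSet μ1 F1 ∧ gClosedSet μ2 F2 ∧
    IsWedgeSet μ1 L1 ∧ IsWedgeSet μ2 L2 ∧ A = (F1 ∩ F2) ∩ (L1 ∩ L2)

def PairwiseT0 {X : Type*} (μ1 μ2 : Set (Set X)) : Prop :=
  ∀ x y : X, x ≠ y →
    (∃ U ∈ μ1, x ∈ U ∧ y ∉ U) ∨ (∃ V ∈ μ2, y ∈ V ∧ x ∉ V)

def PairwiseT1 {X : Type*} (μ1 μ2 : Set (Set X)) : Prop :=
  ∀ x y : X, x ≠ y →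
    (∃ U ∈ μ1, x ∈ U ∧ y ∉ U) ∧ (∃ V ∈ μ2, y ∈ V ∧ x ∉ V)

def PairwiseSymmetric {X : Type*} (μ1 μ2 : Set (Set X)) : Prop :=
  ∀ x y : X, (x ∈ gCl μ1 {y} → y ∈ gCl μ2 {x}) ∧ (x ∈ gCl μ2 {y} → y ∈ gCl μ1 {x})

def PairwiseTHalf {X : Type*} (μ1 μ2 : Set (Set X)) : Prop :=
  (∀ A : Set X, GClosedWrt μ1 μ2 A → gClosedSet μ1 A) ∧
  (∀ A : Set X, GClosedWrt μ2 μ1 A → gClosedSet μ2 A)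

def PairwiseR0 {X : Type*} (μ1 μ2 : Set (Set X)) : Prop :=
  (∀ G ∈ μ1, ∀ x ∈ G, gCl μ2 {x} ⊆ G) ∧ (∀ G ∈ μ2, ∀ x ∈ G, gCl μ1 {x} ⊆ G)

def PairwiseLamSymmetric {X : Type*} (μ1 μ2 : Set (Set X)) : Prop :=
  ∀ A : Set X, PairwiseLamClosed μ1 μ2 A →
    LamClosedWrt μ1 μ2 A ∧ LamClosedWrt μ2 μ1 A

/-- `A` and `B` are μ-weakly separated. -/
def MuWeaklySeparated {X : Type*} (μ : Set (Set X)) (A B : Set X) : Prop :=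
  ∃ U ∈ μ, ∃ V ∈ μ, A ⊆ U ∧ B ⊆ V ∧ A ∩ V = ∅ ∧ B ∩ U = ∅

def PairwiseTQuarter {X : Type*} (μ1 μ2 : Set (Set X)) : Prop :=
  ∀ P : Set X, P.Finite → ∀ y ∉ P,
    ∃ A : Set X, P ⊆ A ∧ y ∉ A ∧
      (A ∈ μ1 ∨ A ∈ μ2 ∨ gClosedSet μ1 A ∨ gClosedSet μ2 A)

def PairwiseTThreeEighths {X : Type*} (μ1 μ2 : Set (Set X)) : Prop :=
  ∀ P : Set X, P.Countable → ∀ y ∉ P,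
    ∃ A : Set X, P ⊆ A ∧ y ∉ A ∧
      (A ∈ μ1 ∨ A ∈ μ2 ∨ gClosedSet μ1 A ∨ gClosedSet μ2 A)

def PairwiseTFiveEighths {X : Type*} (μ1 μ2 : Set (Set X)) : Prop :=
  ∀ P : Set X, ∀ y ∉ P,
    ∃ A : Set X, P ⊆ A ∧ y ∉ A ∧
      (A ∈ μ1 ∨ A ∈ μ2 ∨ gClosedSet μ1 A ∨ gClosedSet μ2 A)

/-! If `x ∉ A` and `{x}` is `μi`-open (resp. `μj`-closed), then `{x}ᶜ` is a `μi`-closed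
(resp. `μj`-open) superset of `A`, so `x ∉ cl_{μi} A` when `A` is `g_{μi}`-closed; hence
`cl_{μi} A = A`. Conversely, if `{x}` is not `μj`-closed, the only `μj`-open superset of `{x}ᶜ`
is `univ`, so `{x}ᶜ` is `g_{μi}`-closed, hence `μi`-closed. -/

section GenTop

variable {X : Type*} {μ μi μj : Set (Set X)} {A F : Set X}

lemma gClosedSet_gCl (hμ : IsGenTop μ) (A : Set X) : gClosedSet μ (gCl μ A) := by
  rw [gClosedSet, gCl, compl_sInter]
  exact hμ.2 _ (by rintro _ ⟨F, ⟨hF, -⟩, rfl⟩; exact hF)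

lemma subset_gCl (μ : Set (Set X)) (A : Set X) : A ⊆ gCl μ A :=
  fun _ hx => mem_sInter.2 fun _ hF => hF.2 hx

lemma gCl_subset (hF : gClosedSet μ F) (hAF : A ⊆ F) : gCl μ A ⊆ F :=
  sInter_subset_of_mem ⟨hF, hAF⟩

lemma gClosedSet_of_gCl_subset (hμ : IsGenTop μ) (hA : gCl μ A ⊆ A) : gClosedSet μ A :=
  (hA.antisymm (subset_gCl μ A)) ▸ gClosedSet_gCl hμ A

lemma gClosedSet_of_gClosedWrt (hμi : IsGenTop μi)
    (hsingleton : ∀ x : X, {x} ∈ μi ∨ gClosedSet μj {x}) (hA : GClosedWrt μi μj A) :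
    gClosedSet μi A := by
  refine gClosedSet_of_gCl_subset hμi fun x hx => ?_
  by_contra hxA
  have hA_sub : A ⊆ {x}ᶜ := subset_compl_singleton_iff.mpr hxA
  rcases hsingleton x with hopen | hclosed
  · exact gCl_subset (by rwa [gClosedSet, compl_compl]) hA_sub hx rfl
  · exact hA _ hclosed hA_sub hx rfl

lemma gClosedWrt_compl_singleton {x : X} (hx : ¬ gClosedSet μj {x}) :
    GClosedWrt μi μj {x}ᶜ := by
  intro U hU hsub
  by_cases hxU : x ∈ U
  · intro y _
    rcases eq_or_ne y x with rfl | hy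
    exacts [hxU, hsub hy]
  · have hU_eq : U = {x}ᶜ := (subset_compl_singleton_iff.mpr hxU).antisymm hsub
    exact absurd (by rwa [hU_eq] at hU) hx

end GenTop

theorem stmt7_general {X : Type*} (μ : Fin 2 → Set (Set X)) (hμ : ∀ k, IsGenTop (μ k))
    (i j : Fin 2) :
    (∀ x : X, {x} ∈ μ i ∨ gClosedSet (μ j) {x}) ↔
      (∀ A : Set X, GClosedWrt (μ i) (μ j) A → gClosedSet (μ i) A) := by
  refine ⟨fun h A hA => gClosedSet_of_gClosedWrt (hμ i) h hA, fun h x => ?_⟩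
  refine or_iff_not_imp_right.mpr fun hx => ?_
  simpa [gClosedSet] using h _ (gClosedWrt_compl_singleton hx)

theorem stmt7 {X : Type*} (μ : Fin 2 → Set (Set X)) (hμ : ∀ k, IsGenTop (μ k))
    (i j : Fin 2) (hij : i ≠ j) :
    (∀ x : X, {x} ∈ μ i ∨ gClosedSet (μ j) {x}) ↔
      (∀ A : Set X, GClosedWrt (μ i) (μ j) A → gClosedSet (μ i) A) :=
  stmt7_general μ hμ i j
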